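/- arXiv:0906.4669 — 11 statements merged into one kernel-verified Lean document; each statement's English description precedes it below -/
import Mathlib

section
/- The set U = K × K × K with multiplication (a,b,c)·(x,y,z) = (a+x, b+y+a^θ x, c+z−ay+bx−a^{θ+1}x) is a group with identity (0,0,0). -/
/-- The Ree group multiplication on `K × K × K`. -/
def ReeMul {K : Type*} [Field K] (θ : K →+* K) :
    K × K × K → K × K × K → K × K × K :=
  fun g h => (g.1 + h.1, g.2.1 + h.2.1 + θ g.1 * h.1,
    g.2.2 + h.2.2 - g.1 * h.2.1 + g.2.1 * h.1 - θ g.1 * g.1 * h.1)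

/-- `U = K × K × K` with the Ree multiplication is a group with identity `(0,0,0)`. -/
theorem stmt0 {K : Type*} [Field K] [CharP K 3] (θ : K →+* K)
    (hθ : ∀ x : K, θ (θ x) = x ^ 3) :
    (∀ g h k : K × K × K, ReeMul θ (ReeMul θ g h) k = ReeMul θ g (ReeMul θ h k)) ∧
    (∀ g : K × K × K, ReeMul θ ((0 : K), (0 : K), (0 : K)) g = g) ∧
    (∀ g : K × K × K, ReeMul θ g ((0 : K), (0 : K), (0 : K)) = g) ∧
    (∀ g : K × K × K, ∃ g' : K × K × K,
      ReeMul θ g g' = ((0 : K), (0 : K), (0 : K)) ∧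
      ReeMul θ g' g = ((0 : K), (0 : K), (0 : K))) := by
  refine ⟨fun g h k => ?_, fun g => ?_, fun g => ?_, fun g => ?_⟩
  · simp only [ReeMul, Prod.mk.injEq, map_add]
    refine ⟨by ring, by ring, by ring⟩
  · simp [ReeMul]
  · simp [ReeMul]
  · refine ⟨(-g.1, -g.2.1 + θ g.1 * g.1, -g.2.2), ?_, ?_⟩ <;>
      simp only [ReeMul, Prod.mk.injEq, map_neg] <;>
      refine ⟨by ring, by ring, by ring⟩
end

section
/- For each t ∈ K*, the map h_t : U → U given by (a,b,c) ↦ (t·a, t^{θ+1}·b, t^{θ+2}·c) is a group automorphism of U, and t ↦ h_t is a group homomorphism from K* to Aut(U). -/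
/-- The map `h_t : (a,b,c) ↦ (t·a, t^{θ+1}·b, t^{θ+2}·c)`. -/
def ReeH {K : Type*} [Field K] (θ : K →+* K) (t : K) :
    K × K × K → K × K × K :=
  fun g => (t * g.1, θ t * t * g.2.1, θ t * t ^ 2 * g.2.2)

theorem ReeH_mul {K : Type*} [Field K] (θ : K →+* K) (s t : K) :
    ReeH θ (s * t) = ReeH θ s ∘ ReeH θ t := by
  funext g
  simp only [ReeH, Function.comp_apply, map_mul, Prod.mk.injEq]
  refine ⟨by ring, by ring, by ring⟩

theorem ReeH_one {K : Type*} [Field K] (θ : K →+* K) : ReeH θ 1 = id := by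
  funext g
  simp [ReeH]

/-- For each `t ∈ K*`, `h_t` is an automorphism of `U`, and `t ↦ h_t` is a homomorphism
from `K*` to `Aut(U)`. -/
theorem stmt2 {K : Type*} [Field K] [CharP K 3] (θ : K →+* K)
    (hθ : ∀ x : K, θ (θ x) = x ^ 3) :
    (∀ t : K, t ≠ 0 → Function.Bijective (ReeH θ t)) ∧
    (∀ t : K, t ≠ 0 → ∀ g h : K × K × K,
      ReeH θ t (ReeMul θ g h) = ReeMul θ (ReeH θ t g) (ReeH θ t h)) ∧
    (∀ s t : K, s ≠ 0 → t ≠ 0 → ReeH θ (s * t) = ReeH θ s ∘ ReeH θ t) := by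
  refine ⟨?_, ?_, fun s t _ _ => ReeH_mul θ s t⟩
  · intro t ht
    have h1 : ReeH θ t ∘ ReeH θ t⁻¹ = id := by
      rw [← ReeH_mul, mul_inv_cancel₀ ht, ReeH_one]
    have h2 : ReeH θ t⁻¹ ∘ ReeH θ t = id := by
      rw [← ReeH_mul, inv_mul_cancel₀ ht, ReeH_one]
    exact Function.bijective_iff_has_inverse.2
      ⟨ReeH θ t⁻¹, congrFun h2, congrFun h1⟩
  · intro t _ g h
    simp only [ReeH, ReeMul, map_mul, Prod.mk.injEq]
    refine ⟨by ring, by ring, by ring⟩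
end

section
/- The norm N(a,b,c) = −a·c^θ + a^{θ+1}·b^θ − a^{θ+3}·b − a²b² + b^{θ+1} + c² − a^{2θ+4} is anisotropic: N(a,b,c) = 0 if and only if (a,b,c) = (0,0,0). -/
/-- The norm of a Ree group. -/
def ReeNorm {K : Type*} [Field K] (θ : K →+* K) (a b c : K) : K :=
  -a * θ c + θ a * a * θ b - θ a * a ^ 3 * b - a ^ 2 * b ^ 2 + θ b * b + c ^ 2
    - (θ a) ^ 2 * a ^ 4

section ReeAux

variable {K : Type*} [Field K] [CharP K 3]

private lemma ree_common (θ : K →+* K) (hθ : ∀ x : K, θ (θ x) = x ^ 3) (b c : K)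
    (h1 : -c ^ 2 - b * θ b + b ^ 2 + θ c - θ b + b + 1 = 0)
    (hG1 : b * c + c + θ b + b - 1 = 0)
    (hsp : c * (c + b - b ^ 2) = 0) : False := by
  have h3 : (3:K) = 0 := by exact_mod_cast CharP.cast_eq_zero K 3
  rcases mul_eq_zero.mp hsp with hc | hc
  · -- branch A : c = 0
    have hsc : θ c = 0 := by
      have t := congrArg θ hc
      simp only [map_add, map_sub, map_mul, map_pow, map_neg, map_one, map_zero, hθ] at t
      linear_combination t
    have hlin : θ b + b - 1 = 0 := by linear_combination hG1 + (-b - 1) * hc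
    have hslin : b ^ 3 + θ b - 1 = 0 := by
      have t := congrArg θ hlin
      simp only [map_add, map_sub, map_mul, map_pow, map_neg, map_one, map_zero, hθ] at t
      linear_combination t
    have hsb3 : b * (b - 1) * (b + 1) = 0 := by linear_combination hslin - hlin
    rcases mul_eq_zero.mp hsb3 with h2 | hb
    · rcases mul_eq_zero.mp h2 with hb | hb
      · have hsb : θ b = 0 := by
          have t := congrArg θ hb
          simp only [map_add, map_sub, map_mul, map_pow, map_neg, map_one, map_zero, hθ] at t
          linear_combination t
        exact one_ne_zero (α := K) (by linear_combination (-1 : K) * hlin + hb + hsb)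
      · have hsb : θ b - 1 = 0 := by
          have t := congrArg θ hb
          simp only [map_add, map_sub, map_mul, map_pow, map_neg, map_one, map_zero, hθ] at t
          linear_combination t
        exact one_ne_zero (α := K) (by linear_combination hlin + (-1 : K) * hb + (-1 : K) * hsb)
    · have hsb : θ b + 1 = 0 := by
        have t := congrArg θ hb
        simp only [map_add, map_sub, map_mul, map_pow, map_neg, map_one, map_zero, hθ] at t
        linear_combination t
      exact one_ne_zero (α := K) (by linear_combination h1 + (c) * hc + (-1 : K) * hsc + (-θ b - b + 1) * hlin + (θ b + 1) * hsb + (b * θ b - θ b - b) * h3)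
  · -- branch B : c + b - b^2 = 0
    have hsc : -θ b ^ 2 + θ c + θ b = 0 := by
      have t := congrArg θ hc
      simp only [map_add, map_sub, map_mul, map_pow, map_neg, map_one, map_zero, hθ] at t
      linear_combination t
    have hlin : b ^ 3 + θ b - 1 = 0 := by linear_combination hG1 + (-b - 1) * hc
    have hslin : θ b ^ 3 + b ^ 3 - 1 = 0 := by
      have t := congrArg θ hlin
      simp only [map_add, map_sub, map_mul, map_pow, map_neg, map_one, map_zero, hθ] at t
      linear_combination t
    have h9 : (b ^ 3 - b) ^ 3 = 0 := by linear_combination (b ^ 6 - b ^ 3 * θ b + b ^ 3 + θ b ^ 2 + θ b + 1) * hlin + (-1 : K) * hslin + (-b ^ 7 + b ^ 5 - b ^ 3 * θ b) * h3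
    have hb3 : b ^ 3 - b = 0 := (pow_eq_zero_iff (by norm_num)).mp h9
    have hsb3 : b * (b - 1) * (b + 1) = 0 := by linear_combination hb3
    rcases mul_eq_zero.mp hsb3 with h2 | hb
    · rcases mul_eq_zero.mp h2 with hb | hb
      · have hsb : θ b = 0 := by
          have t := congrArg θ hb
          simp only [map_add, map_sub, map_mul, map_pow, map_neg, map_one, map_zero, hθ] at t
          linear_combination t
        exact one_ne_zero (α := K) (by linear_combination h1 + (c) * hc + (-1 : K) * hsc + (b * c - c + θ b - b - 1) * hb + (-θ b - 1) * hsb + (θ b) * h3)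
      · have hsb : θ b - 1 = 0 := by
          have t := congrArg θ hb
          simp only [map_add, map_sub, map_mul, map_pow, map_neg, map_one, map_zero, hθ] at t
          linear_combination t
        exact one_ne_zero (α := K) (by linear_combination h1 + (c) * hc + (-1 : K) * hsc + (b * c + θ b - b + 1) * hb + (-θ b - 1) * hsb + (θ b - b) * h3)
    · have hsb : θ b + 1 = 0 := by
        have t := congrArg θ hb
        simp only [map_add, map_sub, map_mul, map_pow, map_neg, map_one, map_zero, hθ] at t
        linear_combination t
      exact one_ne_zero (α := K) (by linear_combination (-1 : K) * h1 + (-c + 1) * hc + hsc + (-b * c - c - θ b - b + 1) * hb + (θ b + 1) * hsb + (b * c + b ^ 2 - θ b) * h3)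

private lemma ree_one (θ : K →+* K) (hθ : ∀ x : K, θ (θ x) = x ^ 3) (b c : K)
    (hN : ReeNorm θ 1 b c = 0) : False := by
  have h3 : (3:K) = 0 := by exact_mod_cast CharP.cast_eq_zero K 3
  have h1 : -c ^ 2 - b * θ b + b ^ 2 + θ c - θ b + b + 1 = 0 := by
    simp only [ReeNorm, map_one] at hN
    linear_combination -hN
  have hE4 : -b ^ 3 * θ b + c ^ 3 - b ^ 3 - θ c ^ 2 + θ b ^ 2 + θ b + 1 = 0 := by
    have t := congrArg θ h1
    simp only [map_add, map_sub, map_mul, map_pow, map_neg, map_one, map_zero, hθ] at t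
    linear_combination t
  have hsplit : (c ^ 2 + b * c + b * θ b + b ^ 2 - c - θ b + b + 1) * (c ^ 2 - b * c + b * θ b + b ^ 2 - b) = 0 := by linear_combination (-c ^ 2 - b * θ b + b ^ 2 - θ c - θ b + b + 1) * h1 + (-1 : K) * hE4 + (b ^ 2 * c ^ 2 + b ^ 3 * θ b - θ b * c ^ 2 + b * c ^ 2 - b * θ b ^ 2 - b ^ 2 * c + b ^ 2 * θ b - b ^ 3 + c ^ 2 + 2 * b * θ b - b ^ 2 + θ b - b) * h3
  rcases mul_eq_zero.mp hsplit with hf | hf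
  · have hsf : b ^ 3 * θ b - b ^ 3 + θ c ^ 2 + θ b * θ c + θ b ^ 2 - θ c + θ b + 1 = 0 := by
      have t := congrArg θ hf
      simp only [map_add, map_sub, map_mul, map_pow, map_neg, map_one, map_zero, hθ] at t
      linear_combination t
    have hG1 : b * c + c + θ b + b - 1 = 0 := by
      have t : θ (b * c + c + θ b + b - 1) = 0 := by
        simp only [map_add, map_sub, map_mul, map_pow, map_neg, map_one, map_zero, hθ]
        linear_combination (-θ b) * h1 + (-1 : K) * hE4 + (c - θ b - b + 1) * hf + (-1 : K) * hsf + (b ^ 2 * θ b + θ b * θ c - b * c + 2 * θ b) * h3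
      exact RingHom.injective θ (by rw [map_zero]; exact t)
    have hsp : c * (c + b - b ^ 2) = 0 := by linear_combination hf + (-b + 1) * hG1 + (-b) * h3
    exact ree_common θ hθ b c h1 hG1 hsp
  · have hsf : b ^ 3 * θ b + θ c ^ 2 - θ b * θ c + θ b ^ 2 - θ b = 0 := by
      have t := congrArg θ hf
      simp only [map_add, map_sub, map_mul, map_pow, map_neg, map_one, map_zero, hθ] at t
      linear_combination t
    have hG1 : b * c + c + θ b + b - 1 = 0 := by
      have t : θ (b * c + c + θ b + b - 1) = 0 := by
        simp only [map_add, map_sub, map_mul, map_pow, map_neg, map_one, map_zero, hθ]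
        linear_combination (-θ b + 1) * h1 + hE4 + (-c - θ b - b + 1) * hf + hsf + (b ^ 2 * θ b + b ^ 3 + θ b * θ c - θ b ^ 2 - b ^ 2 + θ b - 1) * h3
      exact RingHom.injective θ (by rw [map_zero]; exact t)
    have hsp : c * (c + b - b ^ 2) = 0 := by linear_combination hf + (-b) * hG1 + (b * c) * h3
    exact ree_common θ hθ b c h1 hG1 hsp

private lemma ree_azero (θ : K →+* K) (hθ : ∀ x : K, θ (θ x) = x ^ 3) (b c : K)
    (hN : ReeNorm θ 0 b c = 0) : b = 0 ∧ c = 0 := by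
  have h3 : (3:K) = 0 := by exact_mod_cast CharP.cast_eq_zero K 3
  have h : c ^ 2 + b * θ b = 0 := by
    simp only [ReeNorm, map_zero] at hN
    linear_combination hN
  have hs : b ^ 3 * θ b + θ c ^ 2 = 0 := by
    have t := congrArg θ h
    simp only [map_add, map_sub, map_mul, map_pow, map_neg, map_one, map_zero, hθ] at t
    linear_combination t
  have hfac : (-b * c + θ c) * (b * c + θ c) = 0 := by linear_combination (-b ^ 2) * h + hs
  have hc : c = 0 := by
    rcases mul_eq_zero.mp hfac with hx | hx
    · have hsx : c ^ 3 - θ b * θ c = 0 := by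
        have t := congrArg θ hx
        simp only [map_add, map_sub, map_mul, map_pow, map_neg, map_one, map_zero, hθ] at t
        linear_combination t
      have h9 : c ^ 3 = 0 := by linear_combination (-c) * h + (-θ b) * hx + (-1 : K) * hsx + (c ^ 3) * h3
      exact (pow_eq_zero_iff (by norm_num : (3:ℕ) ≠ 0)).mp h9
    · have hsx : c ^ 3 + θ b * θ c = 0 := by
        have t := congrArg θ hx
        simp only [map_add, map_sub, map_mul, map_pow, map_neg, map_one, map_zero, hθ] at t
        linear_combination t
      have h9 : c ^ 3 = 0 := by linear_combination (-c) * h + (θ b) * hx + (-1 : K) * hsx + (c ^ 3) * h3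
      exact (pow_eq_zero_iff (by norm_num : (3:ℕ) ≠ 0)).mp h9
  refine ⟨?_, hc⟩
  have hb : θ b * b = 0 := by linear_combination h + (-c) * (by linear_combination hc : c = (0:K))
  rcases mul_eq_zero.mp hb with h0 | h0
  · exact RingHom.injective θ (by rw [map_zero]; exact h0)
  · exact h0

private lemma ree_scale (θ : K →+* K) (hθ : ∀ x : K, θ (θ x) = x ^ 3) (a b c : K)
    (ha : a ≠ 0) (hN : ReeNorm θ a b c = 0) : False := by
  have h3 : (3:K) = 0 := by exact_mod_cast CharP.cast_eq_zero K 3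
  have ha' : θ a ≠ 0 := fun h => ha (RingHom.injective θ (by rw [map_zero]; exact h))
  set t := a⁻¹ with ht
  have hat : a * t = 1 := mul_inv_cancel₀ ha
  have hat2 : θ a * θ t = 1 := by rw [← map_mul, hat, map_one]
  apply ree_one θ hθ (b * (θ t * t)) (c * (θ t * t ^ 2))
  have key : ReeNorm θ 1 (b * (θ t * t)) (c * (θ t * t ^ 2)) * (θ a ^ 2 * a ^ 4)
      = ReeNorm θ a b c := by
    simp only [ReeNorm, map_mul, map_pow, map_one, hθ]
    linear_combination (θ a ^ 2 * θ t ^ 2 * c ^ 2 + θ a ^ 2 * θ t ^ 2 * b * θ b + a * θ a ^ 2 * θ t * θ b - a * θ a ^ 2 * θ t ^ 2 * θ c + a * θ a ^ 2 * t * θ t ^ 2 * c ^ 2 + a * θ a ^ 2 * t * θ t ^ 2 * b * θ b - a ^ 2 * θ a ^ 2 * θ t ^ 2 * b ^ 2 + a ^ 2 * θ a ^ 2 * t * θ t * θ b - a ^ 2 * θ a ^ 2 * t * θ t ^ 2 * θ c + a ^ 2 * θ a ^ 2 * t ^ 2 * θ t ^ 2 * c ^ 2 + a ^ 2 * θ a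 ^ 2 * t ^ 2 * θ t ^ 2 * b * θ b - a ^ 3 * θ a ^ 2 * θ t * b - a ^ 3 * θ a ^ 2 * t * θ t ^ 2 * b ^ 2 + a ^ 3 * θ a ^ 2 * t ^ 2 * θ t * θ b - a ^ 3 * θ a ^ 2 * t ^ 2 * θ t ^ 2 * θ c + a ^ 3 * θ a ^ 2 * t ^ 3 * θ t ^ 2 * c ^ 2 + a ^ 3 * θ a ^ 2 * t ^ 3 * θ t ^ 2 * b * θ b) * hat + (c ^ 2 + b * θ b + θ a * θ t * c ^ 2 + θ a * θ t * b * θ b - a * θ c + a * θ a * θ b - a * θ a * θ t * θ c - a ^ 2 * b ^ 2 - a ^ 2 * θ a * θ t * b ^ 2 - a ^ 3 * θ a * b) * hat2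
  have h0 : ReeNorm θ 1 (b * (θ t * t)) (c * (θ t * t ^ 2)) * (θ a ^ 2 * a ^ 4) = 0 := by
    rw [key, hN]
  rcases mul_eq_zero.mp h0 with h | h
  · exact h
  · exact absurd h (mul_ne_zero (pow_ne_zero 2 ha') (pow_ne_zero 4 ha))

end ReeAux

/-- The Ree norm is anisotropic: `N(a,b,c) = 0` iff `(a,b,c) = (0,0,0)`. -/
theorem stmt3 {K : Type*} [Field K] [CharP K 3] (θ : K →+* K)
    (hθ : ∀ x : K, θ (θ x) = x ^ 3) (a b c : K) :
    ReeNorm θ a b c = 0 ↔ a = 0 ∧ b = 0 ∧ c = 0 := by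
  constructor
  · intro hN
    by_cases ha : a = 0
    · subst ha
      obtain ⟨hb, hc⟩ := ree_azero θ hθ b c hN
      exact ⟨rfl, hb, hc⟩
    · exact absurd hN (fun hN => ree_scale θ hθ a b c ha hN)
  · rintro ⟨rfl, rfl, rfl⟩
    simp [ReeNorm]
end

section
/- The identity w = a·v + b·u + c² holds, where v = a^θ b^θ − c^θ + a b² + b c − a^{2θ+3}, u = a² b − a c + b^θ − a^{θ+3}, and w = N(a,b,c) = −a c^θ + a^{θ+1} b^θ − a^{θ+3} b − a² b² + b^{θ+1} + c² − a^{2θ+4}. -/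
/-- The identity `w = a·v + b·u + c²` for the Ree norm. -/
theorem stmt4 {K : Type*} [Field K] [CharP K 3] (θ : K →+* K)
    (hθ : ∀ x : K, θ (θ x) = x ^ 3) (a b c v u w : K)
    (hv : v = θ a * θ b - θ c + a * b ^ 2 + b * c - (θ a) ^ 2 * a ^ 3)
    (hu : u = a ^ 2 * b - a * c + θ b - θ a * a ^ 3)
    (hw : w = -a * θ c + θ a * a * θ b - θ a * a ^ 3 * b - a ^ 2 * b ^ 2 + θ b * b
      + c ^ 2 - (θ a) ^ 2 * a ^ 4) :
    w = a * v + b * u + c ^ 2 := by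
  have h3 : (3 : K) = 0 := CharP.cast_eq_zero K 3
  subst hv hu hw
  linear_combination (-(a ^ 2 * b ^ 2)) * h3
end

section
/- For all (a,b,c) ∈ K³ and t ∈ K*, N(t·a, t^{θ+1}·b, t^{θ+2}·c) = t^{2θ+4}·N(a,b,c). -/
/-- `N(t·a, t^{θ+1}·b, t^{θ+2}·c) = t^{2θ+4}·N(a,b,c)` for all `t ∈ K*`. -/
theorem stmt6 {K : Type*} [Field K] [CharP K 3] (θ : K →+* K)
    (hθ : ∀ x : K, θ (θ x) = x ^ 3) (a b c t : K) (ht : t ≠ 0) :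
    ReeNorm θ (t * a) (θ t * t * b) (θ t * t ^ 2 * c)
      = (θ t) ^ 2 * t ^ 4 * ReeNorm θ a b c := by
  simp only [ReeNorm, map_mul, map_pow, hθ]
  ring
end

section
/- The norm N is invariant under group inversion: N(−a, −b + a^{θ+1}, −c) = N(a,b,c) for all a, b, c ∈ K. -/
/-- The Ree norm is invariant under group inversion:
`N(−a, −b + a^{θ+1}, −c) = N(a,b,c)`. -/
theorem stmt7 {K : Type*} [Field K] [CharP K 3] (θ : K →+* K)
    (hθ : ∀ x : K, θ (θ x) = x ^ 3) (a b c : K) :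
    ReeNorm θ (-a) (-b + θ a * a) (-c) = ReeNorm θ a b c := by
  have h3 : (3 : K) = 0 := by exact_mod_cast CharP.cast_eq_zero K 3
  simp only [ReeNorm, map_neg, map_add, map_mul, hθ]
  ring_nf
  linear_combination (a ^ 3 * θ a * b - a * θ a * θ b) * h3
end

section
/- Suppose b, c ∈ K satisfy the three equations b^θ − c^θ + b² + bc − 1 = 0, b^{θ+1} + b² − b − bc + c² = 0, and b^θ + c^θ − b² − b − 1 + bc − c = 0. Then a contradiction follows; i.e., no such b, c exist. -/
/-- No `b, c ∈ K` satisfy the three equations arising from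
`N(1,b,c) = 0`, `v(1,b,c) = 0` and `v((1,b,c)⁻¹) = 0`. -/
theorem stmt10 {K : Type*} [Field K] [CharP K 3] (θ : K →+* K)
    (hθ : ∀ x : K, θ (θ x) = x ^ 3) (b c : K)
    (h1 : θ b - θ c + b ^ 2 + b * c - 1 = 0)
    (h2 : θ b * b + b ^ 2 - b - b * c + c ^ 2 = 0)
    (h3 : θ b + θ c - b ^ 2 - b - 1 + b * c - c = 0) :
    False := by
  have h30 : (3 : K) = 0 := CharP.cast_eq_zero K 3
  have e1 : θ b = 1 - b - c - b * c := by
    linear_combination 2 * h1 + 2 * h3 + (-θ b - b * c + b + c + 1) * h30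
  have e2 : θ c = b ^ 2 - b - c := by
    linear_combination (-2) * h1 + 2 * h3 + (-θ c + b ^ 2 + b + c) * h30
  have e3 : c * (c + b - b ^ 2) = 0 := by
    linear_combination h2 - b * e1 + b * c * h30
  have hc0 : c = 0 := by
    rcases mul_eq_zero.mp e3 with hc | hc
    · exact hc
    · have hz : θ c = 0 := by linear_combination e2 - hc
      have h3z : c ^ 3 = 0 := by rw [← hθ c, hz, map_zero]
      exact pow_eq_zero_iff (by norm_num) |>.mp h3z
  subst hc0
  rw [map_zero] at e2
  have hb : b * (b - 1) = 0 := by linear_combination -e2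
  rcases mul_eq_zero.mp hb with hb | hb
  · subst hb
    rw [map_zero] at e1
    exact one_ne_zero (by linear_combination -e1)
  · have hb1 : b = 1 := by linear_combination hb
    subst hb1
    rw [map_one] at e1
    exact one_ne_zero (by linear_combination e1)
end

section
/- If |K| > 3, there exists t in the subgroup of K* generated by squares such that t^{θ+1} ≠ 1; consequently t ≠ 1 and t^{θ+2} ≠ 1. -/
/-- If `|K| > 3`, there exists `t` in the subgroup of `K*` generated by the squares
such that `t^{θ+1} ≠ 1`; consequently `t ≠ 1` and `t^{θ+2} ≠ 1`. -/
theorem stmt14 {K : Type*} [Field K] [CharP K 3] (θ : K →+* K)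
    (hθ : ∀ x : K, θ (θ x) = x ^ 3)
    (hK : ∃ x : K, x ≠ 0 ∧ x ≠ 1 ∧ x ≠ -1) :
    ∃ t : Kˣ, t ∈ Subgroup.closure {x : Kˣ | IsSquare x} ∧
      θ (t : K) * (t : K) ≠ 1 ∧ (t : K) ≠ 1 ∧ θ (t : K) * (t : K) ^ 2 ≠ 1 := by
  obtain ⟨x, hx0, hx1, hxm1⟩ := hK
  have h3 : (3 : K) = 0 := by exact_mod_cast CharP.cast_eq_zero K 3
  have key : ∃ y : K, y ≠ 0 ∧ θ (y ^ 2) * y ^ 2 ≠ 1 := by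
    by_contra h
    push_neg at h
    have h4 : ∀ y : K, y ≠ 0 → y ^ 4 = 1 := by
      intro y hy
      have h1 := h y hy
      rw [map_pow] at h1
      have hθy : θ y ≠ 0 := by
        intro hz
        rw [hz] at h1
        simp at h1
      have h2 := h (θ y) hθy
      rw [map_pow, hθ] at h2
      linear_combination h2 - y ^ 4 * h1
    have hx4 := h4 x hx0
    have hx2 : x ^ 2 = -1 := by
      have hsplit : (x ^ 2 - 1) * (x ^ 2 + 1) = 0 := by linear_combination hx4
      rcases mul_eq_zero.mp hsplit with h' | h'
      · have : (x - 1) * (x + 1) = 0 := by linear_combination h'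
        rcases mul_eq_zero.mp this with h'' | h''
        · exact absurd (by linear_combination h'') hx1
        · exact absurd (by linear_combination h'') hxm1
      · linear_combination h'
    have hxp0 : x + 1 ≠ 0 := fun h' => hxm1 (by linear_combination h')
    have hxp4 := h4 (x + 1) hxp0
    have hsplit : ((x + 1) ^ 2 - 1) * ((x + 1) ^ 2 + 1) = 0 := by linear_combination hxp4
    rcases mul_eq_zero.mp hsplit with h' | h'
    · -- (x+1)^2 = 1, but (x+1)^2 = -x, so x = -1
      exact hxm1 (by linear_combination -h' + hx2 + x * h3)
    · -- (x+1)^2 = -1, so x = 1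
      exact hx1 (by linear_combination -h' + hx2 + x * h3)
  obtain ⟨y, hy0, hy⟩ := key
  refine ⟨(Units.mk0 y hy0) ^ 2, ?_, ?_, ?_, ?_⟩
  · exact Subgroup.subset_closure ⟨Units.mk0 y hy0, sq (Units.mk0 y hy0)⟩
  · -- θ(t) * t ≠ 1
    intro hc
    apply hy
    rw [Units.val_pow_eq_pow_val, Units.val_mk0] at hc
    exact hc
  · intro hc
    apply hy
    rw [Units.val_pow_eq_pow_val, Units.val_mk0] at hc
    rw [hc]
    simp
  · -- θ(t) * t^2 ≠ 1
    intro hc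
    rw [Units.val_pow_eq_pow_val, Units.val_mk0] at hc
    set tc : K := y ^ 2 with htc
    have htc0 : tc ≠ 0 := pow_ne_zero 2 hy0
    have hθt0 : θ tc ≠ 0 := by
      intro hz
      rw [hz, zero_mul] at hc
      exact zero_ne_one hc
    have e1 : tc ^ 3 * θ tc ^ 2 = 1 := by
      have := congrArg θ hc
      rw [map_mul, hθ tc, map_pow, map_one] at this
      linear_combination this
    have e2 : tc ^ 4 * θ tc ^ 2 = 1 := by
      have : tc ^ 4 * θ tc ^ 2 = (θ tc * tc ^ 2) ^ 2 := by ring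
      rw [this, hc, one_pow]
    have e3 : tc ^ 3 * θ tc ^ 2 = tc ^ 4 * θ tc ^ 2 := by rw [e1, e2]
    have e4 : tc ^ 3 = tc ^ 4 :=
      mul_right_cancel₀ (pow_ne_zero 2 hθt0) e3
    have e5 : tc = 1 := by
      have h' : tc ^ 3 * tc = tc ^ 3 * 1 := by
        rw [← pow_succ, mul_one]; exact e4.symm
      exact mul_left_cancel₀ (pow_ne_zero 3 htc0) h'
    -- then θ(tc) * tc^2 = 1 and tc = 1 make θ(tc)*tc = 1, contradicting hy
    apply hy
    rw [htc] at e5 ⊢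
    rw [e5]
    simp
end

section
/- For any t ∈ K, the map x ↦ θ(x)·x² (i.e. x^{θ+2}) and the map x ↦ x²/θ(x) (i.e. x^{2−θ}) are mutually inverse bijections of K*; equivalently, if a, u ∈ K* satisfy a²·θ(u)^{−1} = θ(a)^{−1}·u², then a = u. -/
/-! Write `x^{θ+2} = θ(x)·x²` and `x^{2−θ} = x²/θ(x)`. Since `θ² = x ↦ x³`, composing the two
maps in either order gives `x ↦ x^{(θ+2)(2−θ)} = x^{4−θ²} = x⁴/x³ = x`. The relation
`a²·θ(u)⁻¹ = θ(a)⁻¹·u²` clears to `a^{θ+2} = u^{θ+2}`, so `a = u` by injectivity. -/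

namespace RingHom

variable {K : Type*} [Field K] (θ : K →+* K)

def powAddTwo (x : K) : K := θ x * x ^ 2

def powTwoSub (x : K) : K := x ^ 2 / θ x

variable {θ} (hθ : ∀ x : K, θ (θ x) = x ^ 3)
include hθ

theorem powTwoSub_powAddTwo {x : K} (hx : x ≠ 0) : θ.powTwoSub (θ.powAddTwo x) = x := by
  have hθx : θ x ≠ 0 := (map_ne_zero θ).mpr hx
  simp only [powTwoSub, powAddTwo, map_mul, map_pow, hθ]
  field_simp

theorem powAddTwo_powTwoSub {x : K} (hx : x ≠ 0) : θ.powAddTwo (θ.powTwoSub x) = x := by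
  have hθx : θ x ≠ 0 := (map_ne_zero θ).mpr hx
  simp only [powTwoSub, powAddTwo, map_div₀, map_pow, hθ]
  field_simp

theorem eq_of_powAddTwo_eq {a u : K} (ha : a ≠ 0) (hu : u ≠ 0)
    (h : θ.powAddTwo a = θ.powAddTwo u) : a = u := by
  rw [← powTwoSub_powAddTwo hθ ha, h, powTwoSub_powAddTwo hθ hu]

theorem eq_of_sq_mul_inv_map_eq {a u : K} (ha : a ≠ 0) (hu : u ≠ 0)
    (h : a ^ 2 * (θ u)⁻¹ = (θ a)⁻¹ * u ^ 2) : a = u := by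
  refine eq_of_powAddTwo_eq hθ ha hu ?_
  have hθa : θ a ≠ 0 := (map_ne_zero θ).mpr ha
  have hθu : θ u ≠ 0 := (map_ne_zero θ).mpr hu
  field_simp at h
  simp only [powAddTwo]
  linear_combination h

end RingHom

theorem stmt15_general {K : Type*} [Field K] (θ : K →+* K)
    (hθ : ∀ x : K, θ (θ x) = x ^ 3) :
    (∀ x : K, x ≠ 0 → (θ x * x ^ 2) ^ 2 / θ (θ x * x ^ 2) = x) ∧
    (∀ x : K, x ≠ 0 → θ (x ^ 2 / θ x) * (x ^ 2 / θ x) ^ 2 = x) ∧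
    (∀ a u : K, a ≠ 0 → u ≠ 0 → a ^ 2 * (θ u)⁻¹ = (θ a)⁻¹ * u ^ 2 → a = u) :=
  ⟨fun _ hx => RingHom.powTwoSub_powAddTwo hθ hx, fun _ hx => RingHom.powAddTwo_powTwoSub hθ hx,
    fun _ _ ha hu h => RingHom.eq_of_sq_mul_inv_map_eq hθ ha hu h⟩

/-- The maps `x ↦ x^{θ+2} = θ(x)·x²` and `x ↦ x^{2−θ} = x²/θ(x)` are mutually inverse
bijections of `K*`; equivalently, `a²·θ(u)⁻¹ = θ(a)⁻¹·u²` implies `a = u`. -/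
theorem stmt15 {K : Type*} [Field K] [CharP K 3] (θ : K →+* K)
    (hθ : ∀ x : K, θ (θ x) = x ^ 3) :
    (∀ x : K, x ≠ 0 → (θ x * x ^ 2) ^ 2 / θ (θ x * x ^ 2) = x) ∧
    (∀ x : K, x ≠ 0 → θ (x ^ 2 / θ x) * (x ^ 2 / θ x) ^ 2 = x) ∧
    (∀ a u : K, a ≠ 0 → u ≠ 0 → a ^ 2 * (θ u)⁻¹ = (θ a)⁻¹ * u ^ 2 → a = u) :=
  stmt15_general θ hθ
end

section
/- With b ≠ 0 and v̂ = b^{−1}c^θ − a^θ b^{θ−1} + a^{2θ+3}b^{−1} − c − ab, û = b − a^{θ+1} + b^{−θ}c² + a²b^{2−θ} + a^{2θ+4}b^{−θ} + ab^{1−θ}c − a^{θ+2}b^{−θ}c + a^{θ+3}b^{1−θ}, the identity w = b·û^θ − v̂·(v̂ − c) holds, where w = N(a,b,c) = −ac^θ + a^{θ+1}b^θ − a^{θ+3}b − a²b² + b^{θ+1} + c² − a^{2θ+4}. -/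
/-- The identity `w = b·û^θ − v̂·(v̂ − c)`. -/
theorem stmt16 {K : Type*} [Field K] [CharP K 3] (θ : K →+* K)
    (hθ : ∀ x : K, θ (θ x) = x ^ 3) (a b c vh uh w : K) (hb : b ≠ 0)
    (hvh : vh = b⁻¹ * θ c - θ a * (θ b * b⁻¹) + (θ a) ^ 2 * a ^ 3 * b⁻¹ - c - a * b)
    (huh : uh = b - θ a * a + (θ b)⁻¹ * c ^ 2 + a ^ 2 * (b ^ 2 * (θ b)⁻¹)
      + (θ a) ^ 2 * a ^ 4 * (θ b)⁻¹ + a * (b * (θ b)⁻¹) * c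
      - θ a * a ^ 2 * (θ b)⁻¹ * c + θ a * a ^ 3 * (b * (θ b)⁻¹))
    (hw : w = -a * θ c + θ a * a * θ b - θ a * a ^ 3 * b - a ^ 2 * b ^ 2 + θ b * b
      + c ^ 2 - (θ a) ^ 2 * a ^ 4) :
    w = b * θ uh - vh * (vh - c) := by
  subst hvh huh hw
  simp only [map_sub, map_add, map_mul, map_pow, map_inv₀, hθ]
  field_simp
  -- the cleared identity holds only modulo 3, which `grind` sees through `CharP K 3`
  grind
end

section
/- With b ≠ 0, ŝ = −b^{−θ}c + ab^{1−θ} − a^{θ+2}b^{−θ} and v̂ = b^{−1}c^θ − a^θ b^{θ−1} + a^{2θ+3}b^{−1} − c − ab, the identity b·ŝ^θ = −a − b^{−1}(v̂ + c) holds. -/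
/-- The identity `b·ŝ^θ = −a − b⁻¹·(v̂ + c)`. -/
theorem stmt19 {K : Type*} [Field K] [CharP K 3] (θ : K →+* K)
    (hθ : ∀ x : K, θ (θ x) = x ^ 3) (a b c sh vh : K) (hb : b ≠ 0)
    (hsh : sh = -((θ b)⁻¹ * c) + a * (b * (θ b)⁻¹) - θ a * a ^ 2 * (θ b)⁻¹)
    (hvh : vh = b⁻¹ * θ c - θ a * (θ b * b⁻¹) + (θ a) ^ 2 * a ^ 3 * b⁻¹ - c - a * b) :
    b * θ sh = -a - b⁻¹ * (vh + c) := by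
  subst hsh hvh
  simp only [map_sub, map_add, map_neg, map_mul, map_inv₀, map_pow, hθ]
  field_simp
  ring
end
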